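/- Suppose in a GTspace (Y,γ) the union of finitely many sλ-closures of sets is sλ-closed. Then every sλ-compact subset of an sλ-regular GTspace is sg_λ-closed. -/
import Mathlib


open Set

variable {Y : Type*}

/-- A generalized topology: contains ∅ and is closed under arbitrary unions. -/
def IsGT (γ : Set (Set Y)) : Prop := ∅ ∈ γ ∧ ∀ S ⊆ γ, ⋃₀ S ∈ γ

/-- γ-closure: intersection of all γ-closed supersets. -/
def gCl (γ : Set (Set Y)) (D : Set Y) : Set Y := ⋂₀ {C | Cᶜ ∈ γ ∧ D ⊆ C}

/-- sγ-open set. -/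
def SOpen (γ : Set (Set Y)) (D : Set Y) : Prop := ∃ V ∈ γ, V ⊆ D ∧ D ⊆ gCl γ V

/-- sγ-closed set. -/
def SClosed (γ : Set (Set Y)) (D : Set Y) : Prop := SOpen γ Dᶜ

/-- semi-kernel: intersection of all sγ-open supersets. -/
def sKer (γ : Set (Set Y)) (D : Set Y) : Set Y := ⋂₀ {G | SOpen γ G ∧ D ⊆ G}

/-- sγ-closure: intersection of all sγ-closed supersets. -/
def sCl (γ : Set (Set Y)) (D : Set Y) : Set Y := ⋂₀ {C | SClosed γ C ∧ D ⊆ C}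

/-- sλ-closed set. -/
def SLClosed (γ : Set (Set Y)) (D : Set Y) : Prop :=
  ∃ M N : Set Y, M = sKer γ M ∧ SClosed γ N ∧ D = M ∩ N

/-- sλ-open set. -/
def SLOpen (γ : Set (Set Y)) (D : Set Y) : Prop := SLClosed γ Dᶜ

/-- sλ-closure: intersection of all sλ-closed supersets. -/
def slCl (γ : Set (Set Y)) (D : Set Y) : Set Y := ⋂₀ {C | SLClosed γ C ∧ D ⊆ C}

/-- sλ-interior: union of all sλ-open subsets. -/
def slInt (γ : Set (Set Y)) (D : Set Y) : Set Y := ⋃₀ {U | SLOpen γ U ∧ U ⊆ D}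

/-- sg_λ-closed set. -/
def SgClosed (γ : Set (Set Y)) (D : Set Y) : Prop :=
  ∀ V : Set Y, SLOpen γ V → D ⊆ V → slCl γ D ⊆ V

/-- sg_λ-open set. -/
def SgOpen (γ : Set (Set Y)) (D : Set Y) : Prop := SgClosed γ Dᶜ

/-- sλR₀: every sλ-open set contains the sλ-closure of each of its singletons. -/
def SLR0 (γ : Set (Set Y)) : Prop :=
  ∀ G : Set Y, SLOpen γ G → ∀ y ∈ G, slCl γ {y} ⊆ G

/-- sλR₁. -/
def SLR1 (γ : Set (Set Y)) : Prop :=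
  ∀ p q : Y, p ∉ slCl γ {q} →
    ∃ E F : Set Y, SLOpen γ E ∧ SLOpen γ F ∧ p ∈ E ∧ q ∈ F ∧ E ∩ F = ∅

/-- sλT₁. -/
def SLT1 (γ : Set (Set Y)) : Prop :=
  ∀ p q : Y, p ≠ q →
    ∃ E F : Set Y, SLOpen γ E ∧ SLOpen γ F ∧ p ∈ E ∧ q ∉ E ∧ q ∈ F ∧ p ∉ F

/-- sλT₂ (sλ-Hausdorff). -/
def SLT2 (γ : Set (Set Y)) : Prop :=
  ∀ p q : Y, p ≠ q →
    ∃ E F : Set Y, SLOpen γ E ∧ SLOpen γ F ∧ p ∈ E ∧ q ∈ F ∧ E ∩ F = ∅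

/-- sλ-regular. -/
def SLRegular (γ : Set (Set Y)) : Prop :=
  ∀ A : Set Y, SLClosed γ A → ∀ p : Y, p ∉ A →
    ∃ E F : Set Y, SLOpen γ E ∧ SLOpen γ F ∧ A ⊆ E ∧ p ∈ F ∧
      slCl γ E ∩ slCl γ F = ∅

/-- sλ-normal. -/
def SLNormal (γ : Set (Set Y)) : Prop :=
  ∀ A B : Set Y, SLClosed γ A → SLClosed γ B → A ∩ B = ∅ →
    ∃ E F : Set Y, SLOpen γ E ∧ SLOpen γ F ∧ A ⊆ E ∧ B ⊆ F ∧
      slCl γ E ∩ slCl γ F = ∅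

/-- sλ-compact. -/
def SLCompact (γ : Set (Set Y)) : Prop :=
  ∀ 𝒞 : Set (Set Y), (∀ U ∈ 𝒞, SLOpen γ U) → ⋃₀ 𝒞 = univ →
    ∃ 𝒟 : Finset (Set Y), ↑𝒟 ⊆ 𝒞 ∧ ⋃₀ (𝒟 : Set (Set Y)) = univ

/-- sλ-weakly separated. -/
def SLWeaklySeparated (γ : Set (Set Y)) (G H : Set Y) : Prop :=
  (G ∩ slCl γ H) ∪ (H ∩ slCl γ G) = ∅

/-- sλ-completely normal. -/
def SLCompletelyNormal (γ : Set (Set Y)) : Prop :=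
  ∀ G H : Set Y, SLWeaklySeparated γ G H →
    ∃ U V : Set Y, SLOpen γ U ∧ SLOpen γ V ∧ G ⊆ U ∧ H ⊆ V ∧
      slCl γ U ∩ slCl γ V = ∅

/-- sλ-continuous real-valued function. -/
def SLContinuousReal (γ : Set (Set Y)) (f : Y → ℝ) : Prop :=
  ∀ s : Set ℝ, IsOpen s → SLOpen γ (f ⁻¹' s)

lemma sOpen_iUnion' {ι : Sort*} (γ : Set (Set Y)) (hγ : IsGT γ) (U : ι → Set Y)
    (h : ∀ i, SOpen γ (U i)) : SOpen γ (⋃ i, U i) := by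
  choose V hVγ hVU hUcl using h
  refine ⟨⋃ i, V i, ?_, ?_, ?_⟩
  · have : (⋃ i, V i) = ⋃₀ (Set.range V) := (Set.sUnion_range V).symm
    rw [this]; exact hγ.2 _ (by rintro _ ⟨i, rfl⟩; exact hVγ i)
  · exact Set.iUnion_mono hVU
  · intro x hx
    obtain ⟨i, hxi⟩ := Set.mem_iUnion.mp hx
    have h1 : x ∈ gCl γ (V i) := hUcl i hxi
    intro C hC
    exact h1 C ⟨hC.1, (Set.subset_iUnion V i).trans hC.2⟩

lemma sOpen_empty (γ : Set (Set Y)) (hγ : IsGT γ) : SOpen γ (∅ : Set Y) :=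
  ⟨∅, hγ.1, le_rfl, empty_subset _⟩

lemma sOpen_univ (γ : Set (Set Y)) (hγ : IsGT γ) : SOpen γ (univ : Set Y) := by
  refine ⟨⋃₀ γ, hγ.2 γ le_rfl, subset_univ _, ?_⟩
  intro x _ C hC
  by_contra hxC
  exact hxC (hC.2 ⟨Cᶜ, hC.1, hxC⟩)

lemma subset_sKer (γ : Set (Set Y)) (A : Set Y) : A ⊆ sKer γ A :=
  fun _ hx _ hG => hG.2 hx

lemma slClosed_empty (γ : Set (Set Y)) (hγ : IsGT γ) : SLClosed γ (∅ : Set Y) := by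
  refine ⟨∅, ∅, ?_, ?_, by simp⟩
  · refine subset_antisymm (subset_sKer γ ∅) ?_
    exact sInter_subset_of_mem ⟨sOpen_empty γ hγ, le_rfl⟩
  · show SOpen γ (∅ : Set Y)ᶜ
    rw [compl_empty]; exact sOpen_univ γ hγ

lemma slClosed_slCl (γ : Set (Set Y)) (hγ : IsGT γ) (A : Set Y) :
    SLClosed γ (slCl γ A) := by
  classical
  set F : Set (Set Y) := {C | SLClosed γ C ∧ A ⊆ C} with hF
  have hch : ∀ C ∈ F, ∃ M N : Set Y, M = sKer γ M ∧ SClosed γ N ∧ C = M ∩ N :=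
    fun C hC => hC.1
  choose! M N hM hN hMN using hch
  refine ⟨⋂ C ∈ F, M C, ⋂ C ∈ F, N C, ?_, ?_, ?_⟩
  · refine subset_antisymm (subset_sKer γ _) ?_
    intro x hx
    simp only [mem_iInter]
    intro C hC
    have hxC : x ∈ sKer γ (M C) := by
      intro G hG
      exact hx G ⟨hG.1, (biInter_subset_of_mem hC).trans hG.2⟩
    rw [← hM C hC] at hxC
    exact hxC
  · show SOpen γ (⋂ C ∈ F, N C)ᶜ
    rw [compl_iInter]
    refine sOpen_iUnion' γ hγ _ fun C => ?_
    rw [compl_iInter]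
    by_cases hC : C ∈ F
    · exact sOpen_iUnion' γ hγ _ fun h => hN C hC
    · simp only [hC, iUnion_of_empty]
      exact sOpen_empty γ hγ
  · ext x
    simp only [slCl, mem_sInter, mem_inter_iff, mem_iInter, ← hF]
    constructor
    · intro h
      exact ⟨fun C hC => ((hMN C hC) ▸ h C hC).1, fun C hC => ((hMN C hC) ▸ h C hC).2⟩
    · rintro ⟨h1, h2⟩ C hC
      rw [hMN C hC]
      exact ⟨h1 C hC, h2 C hC⟩

lemma subset_slCl (γ : Set (Set Y)) (A : Set Y) : A ⊆ slCl γ A :=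
  fun _ hx _ hC => hC.2 hx

lemma slCl_subset (γ : Set (Set Y)) {A C : Set Y} (h1 : SLClosed γ C) (h2 : A ⊆ C) :
    slCl γ A ⊆ C := sInter_subset_of_mem ⟨h1, h2⟩

theorem stmt12 (γ : Set (Set Y)) (hγ : IsGT γ)
    (hunion : ∀ A B : Set Y, SLClosed γ A → SLClosed γ B → SLClosed γ (A ∪ B))
    (hreg : ∀ (y : Y) (G : Set Y), SLOpen γ G → y ∈ G →
      ∃ V : Set Y, SLOpen γ V ∧ y ∈ V ∧ V ⊆ slCl γ V ∧ slCl γ V ⊆ G)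
    (D : Set Y)
    (hcomp : ∀ 𝒞 : Set (Set Y), (∀ U ∈ 𝒞, SLOpen γ U) → D ⊆ ⋃₀ 𝒞 →
      ∃ 𝒟 : Finset (Set Y), ↑𝒟 ⊆ 𝒞 ∧ D ⊆ ⋃₀ (𝒟 : Set (Set Y))) :
    SgClosed γ D := by
  classical
  intro V hV hDV
  set 𝒞 : Set (Set Y) := {W | SLOpen γ W ∧ slCl γ W ⊆ V} with h𝒞
  have hcov : D ⊆ ⋃₀ 𝒞 := by
    intro x hx
    obtain ⟨W, hWopen, hxW, _, hWcl⟩ := hreg x V hV (hDV hx)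
    exact ⟨W, ⟨hWopen, hWcl⟩, hxW⟩
  obtain ⟨𝒟, h𝒟sub, h𝒟cov⟩ := hcomp 𝒞 (fun U hU => hU.1) hcov
  set K : Set Y := ⋃ W ∈ 𝒟, slCl γ W with hK
  have hgen : ∀ s : Finset (Set Y), SLClosed γ (⋃ W ∈ s, slCl γ W) := by
    intro s
    induction s using Finset.induction with
    | empty => simpa using slClosed_empty γ hγ
    | @insert a s hni ih =>
      rw [Finset.set_biUnion_insert]
      exact hunion _ _ (slClosed_slCl γ hγ a) ih
  have hKclosed : SLClosed γ K := hgen 𝒟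
  have hDK : D ⊆ K := by
    intro x hx
    obtain ⟨W, hW𝒟, hxW⟩ := h𝒟cov hx
    exact mem_biUnion hW𝒟 (subset_slCl γ W hxW)
  have hKV : K ⊆ V := by
    refine iUnion₂_subset fun W hW => ?_
    exact (h𝒟sub hW).2
  exact (slCl_subset γ hKclosed hDK).trans hKV
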